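/- Let h₃ be the Heisenberg algebra with [X₁,X₂]=−X₃ and dual basis α¹,α²,α³. For a complex parameter t = r·e^{iϑ} with r² ≠ 1, set c=cos ϑ, s=sin ϑ, and define on W = span{X₂,X₃}⊕span{α²,α³}: φ_t = (2rc/(1−r²))(X₂⊗α² + X₃⊗α³), θ_t = ((r²−2rs+1)/(1−r²)) α²∧α³, π_t = ((r²+2rs+1)/(1−r²)) X₂∧X₃, and Φ_t(X+α) = φ_t(X) + π_t^♯(α) + θ_t^♭(X) − φ_t*(α). Then Φ_t² = −I on W, i.e. together with F=X₁, η=α¹ (and Φ_t vanishing on ℝF⊕ℝη) this defines a generalized almost contact pair on h₃. -/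

import Mathlib

/-! On `W` the endomorphism `Φ_t` has the block form `φ = k·I`, `θ^♭ = m·J`, `π^♯ = l·J'`
with `J`, `J'` the two quarter turns, so `Φ_t² = (k² − m l)·I`. For the coefficients of `Φ_t`
one has `m l − k² = 1` because `(r² + 1)² − 4r²(c² + s²) = (1 − r²)²`. -/

/-- For `t = r e^{iϑ}`, the endomorphism
`Φ_t(X+α) = φ_t(X) + π_t^♯(α) + θ_t^♭(X) − φ_t^*(α)` on
`W = span{X₂,X₃} ⊕ span{α²,α³}`, where an element `((x₂,x₃),(p₂,p₃))` stands for
`x₂X₂ + x₃X₃ + p₂α² + p₃α³`, and (with `c = cos ϑ`, `s = sin ϑ`)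
`φ_t = (2rc/(1−r²))(X₂⊗α² + X₃⊗α³)`, `θ_t = ((r²−2rs+1)/(1−r²)) α²∧α³`,
`π_t = ((r²+2rs+1)/(1−r²)) X₂∧X₃`. -/
noncomputable def h3PhiT (r ϑ : ℝ) (u : (ℝ × ℝ) × (ℝ × ℝ)) : (ℝ × ℝ) × (ℝ × ℝ) :=
  let c := Real.cos ϑ
  let s := Real.sin ϑ
  let k := 2 * r * c / (1 - r ^ 2)
  let m := (r ^ 2 - 2 * r * s + 1) / (1 - r ^ 2)
  let l := (r ^ 2 + 2 * r * s + 1) / (1 - r ^ 2)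
  ((k * u.1.1 - l * u.2.2, k * u.1.2 + l * u.2.1),
    (-(m * u.1.2) - k * u.2.1, m * u.1.1 - k * u.2.2))

/-- `φ(X) + π^♯(α) + θ^♭(X) − φ^*(α)` on `W` for `φ = k·I`, `θ = m α²∧α³`, `π = l X₂∧X₃`. -/
def blockEndo {R : Type*} [CommRing R] (k m l : R) (u : (R × R) × (R × R)) :
    (R × R) × (R × R) :=
  ((k * u.1.1 - l * u.2.2, k * u.1.2 + l * u.2.1),
    (-(m * u.1.2) - k * u.2.1, m * u.1.1 - k * u.2.2))

theorem blockEndo_blockEndo {R : Type*} [CommRing R] (k m l : R) (u : (R × R) × (R × R)) :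
    blockEndo k m l (blockEndo k m l u) = (k ^ 2 - m * l) • u := by
  obtain ⟨⟨x₂, x₃⟩, p₂, p₃⟩ := u
  simp only [blockEndo, Prod.smul_mk, smul_eq_mul, Prod.mk.injEq]
  refine ⟨⟨?_, ?_⟩, ?_, ?_⟩ <;> ring

theorem h3PhiT_eq_blockEndo (r ϑ : ℝ) :
    h3PhiT r ϑ = blockEndo (2 * r * Real.cos ϑ / (1 - r ^ 2))
      ((r ^ 2 - 2 * r * Real.sin ϑ + 1) / (1 - r ^ 2))
      ((r ^ 2 + 2 * r * Real.sin ϑ + 1) / (1 - r ^ 2)) :=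
  rfl

theorem h3PhiT_coeff_identity (r ϑ : ℝ) (hr : r ^ 2 ≠ 1) :
    (2 * r * Real.cos ϑ / (1 - r ^ 2)) ^ 2
      - (r ^ 2 - 2 * r * Real.sin ϑ + 1) / (1 - r ^ 2)
        * ((r ^ 2 + 2 * r * Real.sin ϑ + 1) / (1 - r ^ 2)) = -1 := by
  have hd : 1 - r ^ 2 ≠ 0 := sub_ne_zero.mpr (Ne.symm hr)
  have key : (2 * r * Real.cos ϑ) ^ 2
      - (r ^ 2 - 2 * r * Real.sin ϑ + 1) * (r ^ 2 + 2 * r * Real.sin ϑ + 1)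
        = -(1 - r ^ 2) ^ 2 := by
    linear_combination (4 * r ^ 2) * Real.sin_sq_add_cos_sq ϑ
  rw [div_pow, div_mul_div_comm, ← sq, ← sub_div, key, neg_div, div_self (pow_ne_zero 2 hd)]

/-- For `r² ≠ 1`, `Φ_t² = −I` on `W`; hence together with `F = X₁`, `η = α¹`
(and `Φ_t` vanishing on `ℝF ⊕ ℝη`) it defines a generalized almost contact pair
on the Heisenberg algebra `h₃`. -/
theorem stmt18 (r ϑ : ℝ) (hr : r ^ 2 ≠ 1) :
    ∀ u : (ℝ × ℝ) × (ℝ × ℝ), h3PhiT r ϑ (h3PhiT r ϑ u) = -u := by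
  intro u
  rw [h3PhiT_eq_blockEndo, blockEndo_blockEndo, h3PhiT_coeff_identity r ϑ hr, neg_one_smul]
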